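/- Let $a_1 < \dots < a_l$ be integers with consecutive gaps at most $b$, let $A = \{a_1,\dots,a_l\}$, and let $n > 2b^2$. Among all nondecreasing tuples $s \in A^n$ with a fixed sum $t$, any tuple that is minimal in lexicographic order satisfies $|\{i : a_1 < s_i < a_l\}| \le 2b^2$. -/
import Mathlib

lemma low_subset {α : Type*} [LinearOrder α] (S : Finset α) (k : ℕ) (hk : k ≤ S.card) :
    ∃ T ⊆ S, T.card = k ∧ ∀ i ∈ T, ∀ j ∈ S, j ≤ i → j ∈ T := by
  classical
  let φ := S.orderIsoOfFin rfl
  refine ⟨(Finset.univ : Finset (Fin k)).image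
      (fun m => (φ ⟨m.val, lt_of_lt_of_le m.isLt hk⟩ : α)), ?_, ?_, ?_⟩
  · intro x hx
    simp only [Finset.mem_image] at hx
    obtain ⟨m, -, rfl⟩ := hx
    exact (φ _).2
  · rw [Finset.card_image_of_injective _ ?_, Finset.card_univ, Fintype.card_fin]
    intro m m' h
    have := congrArg Fin.val (φ.injective (Subtype.coe_injective h))
    exact Fin.ext this
  · intro i hi j hj hji
    simp only [Finset.mem_image] at hi ⊢
    obtain ⟨m, -, rfl⟩ := hi
    set mj := φ.symm ⟨j, hj⟩ with hmj
    have hj' : j = (φ mj : α) := by rw [hmj, OrderIso.apply_symm_apply]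
    have hle : mj ≤ ⟨m.val, lt_of_lt_of_le m.isLt hk⟩ := by
      rw [← φ.le_iff_le, ← Subtype.coe_le_coe, ← hj']
      exact hji
    refine ⟨⟨mj.val, lt_of_le_of_lt hle m.isLt⟩, Finset.mem_univ _, ?_⟩
    rw [hj']

lemma high_subset {α : Type*} [LinearOrder α] (S : Finset α) (k : ℕ) (hk : k ≤ S.card) :
    ∃ T ⊆ S, T.card = k ∧ ∀ i ∈ T, ∀ j ∈ S, i ≤ j → j ∈ T := by
  classical
  let φ := S.orderIsoOfFin rfl
  have hidx : ∀ m : Fin k, S.card - k + m.val < S.card := fun m => by omega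
  refine ⟨(Finset.univ : Finset (Fin k)).image
      (fun m => (φ ⟨S.card - k + m.val, hidx m⟩ : α)), ?_, ?_, ?_⟩
  · intro x hx
    simp only [Finset.mem_image] at hx
    obtain ⟨m, -, rfl⟩ := hx
    exact (φ _).2
  · rw [Finset.card_image_of_injective _ ?_, Finset.card_univ, Fintype.card_fin]
    intro m m' h
    have := congrArg Fin.val (φ.injective (Subtype.coe_injective h))
    simp only at this
    exact Fin.ext (by omega)
  · intro i hi j hj hji
    simp only [Finset.mem_image] at hi ⊢
    obtain ⟨m, -, rfl⟩ := hi
    set mj := φ.symm ⟨j, hj⟩ with hmj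
    have hj' : j = (φ mj : α) := by rw [hmj, OrderIso.apply_symm_apply]
    have hle : (⟨S.card - k + m.val, hidx m⟩ : Fin S.card) ≤ mj := by
      rw [← φ.le_iff_le, ← Subtype.coe_le_coe, ← hj']
      exact hji
    have hlev : S.card - k + m.val ≤ mj.val := hle
    have h2 : mj.val - (S.card - k) < k := by have := mj.isLt; omega
    refine ⟨⟨mj.val - (S.card - k), h2⟩, Finset.mem_univ _, ?_⟩
    rw [hj']
    exact congrArg _ (congrArg φ (Fin.ext
      (show S.card - k + (mj.val - (S.card - k)) = mj.val by omega)))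

/-- Strict lexicographic order on tuples. -/
def LexLt {n : ℕ} (s s' : Fin n → ℤ) : Prop :=
  ∃ i : Fin n, (∀ j : Fin n, j < i → s j = s' j) ∧ s i < s' i

set_option maxHeartbeats 2000000 in
theorem stmt_4 (b l : ℕ) (hl : 1 ≤ l) (a : Fin l → ℤ)
    (hmono : StrictMono a)
    (hgap : ∀ (i : ℕ) (h : i + 1 < l), a ⟨i + 1, h⟩ - a ⟨i, by omega⟩ ≤ (b : ℤ))
    (n : ℕ) (hn : 2 * b ^ 2 < n) (t : ℤ)
    (s : Fin n → ℤ) (hsA : ∀ i, s i ∈ Set.range a) (hsmono : Monotone s)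
    (hsum : ∑ i, s i = t)
    -- `s` is lexicographically minimal among nondecreasing tuples over `A` with sum `t`
    (hmin : ∀ s' : Fin n → ℤ, (∀ i, s' i ∈ Set.range a) → Monotone s' →
      (∑ i, s' i = t) → ¬ LexLt s' s) :
    (Finset.univ.filter
      (fun i => a ⟨0, by omega⟩ < s i ∧ s i < a ⟨l - 1, by omega⟩)).card ≤ 2 * b ^ 2 := by
  by_contra hcard
  push_neg at hcard
  choose K hK using hsA
  have h0l : 0 < l := hl
  have htl : l - 1 < l := Nat.sub_lt hl Nat.one_pos
  -- the set of "middle" indices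
  set M : Finset (Fin n) :=
    Finset.univ.filter (fun i => a ⟨0, by omega⟩ < s i ∧ s i < a ⟨l - 1, by omega⟩) with hMdef
  have hMcard : 2 * b ^ 2 < M.card := hcard
  -- index bounds on middle elements
  have hkpos : ∀ i ∈ M, 0 < (K i).val := by
    intro i hi
    rw [hMdef, Finset.mem_filter] at hi
    have h1 : a ⟨0, h0l⟩ < s i := hi.2.1
    exact hmono.lt_iff_lt.mp (h1.trans_eq (hK i).symm)
  have hktop : ∀ i ∈ M, (K i).val < l - 1 := by
    intro i hi
    rw [hMdef, Finset.mem_filter] at hi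
    have h1 : s i < a ⟨l - 1, htl⟩ := hi.2.2
    exact hmono.lt_iff_lt.mp (lt_of_eq_of_lt (hK i) h1)
  have hMval : ∀ i j, i ∈ M → s j = s i → j ∈ M := by
    intro i j hi hv
    rw [hMdef, Finset.mem_filter] at hi ⊢
    exact ⟨Finset.mem_univ _, hi.2.1.trans_eq hv.symm, hv.trans_lt hi.2.2⟩
  have hvalK : ∀ i j : Fin n, s i = s j → K i = K j := fun i j h =>
    hmono.injective ((hK i).trans (h.trans (hK j).symm))
  -- down-gap and up-gap
  have hklD : ∀ k : Fin l, k.val - 1 < l := fun k =>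
    Nat.lt_of_le_of_lt (Nat.sub_le _ _) k.isLt
  have hklE : ∀ k : Fin l, min (k.val + 1) (l - 1) < l := fun k =>
    Nat.lt_of_le_of_lt (min_le_right _ _) htl
  set D : Fin l → ℤ := fun k => a k - a ⟨k.val - 1, hklD k⟩ with hD
  set E : Fin l → ℤ := fun k => a ⟨min (k.val + 1) (l - 1), hklE k⟩ - a k with hE
  set d : Fin n → ℤ := fun i => D (K i) with hd
  set e : Fin n → ℤ := fun i => E (K i) with he
  -- a proof-irrelevant version of the gap hypothesis
  have hgap2 : ∀ (p q : ℕ) (hp : p < l) (hq : q < l), q = p + 1 →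
      a ⟨q, hq⟩ - a ⟨p, hp⟩ ≤ (b : ℤ) := by
    intro p q hp hq hpq
    subst hpq
    exact hgap p hq
  have hsubd : ∀ i, s i - d i = a ⟨(K i).val - 1, hklD (K i)⟩ := by
    intro i
    have h := hK i
    simp only [hd, hD]
    omega
  have hadde : ∀ i, s i + e i = a ⟨min ((K i).val + 1) (l - 1), hklE (K i)⟩ := by
    intro i
    have h := hK i
    simp only [he, hE]
    omega
  have hd1 : ∀ i ∈ M, 1 ≤ d i := by
    intro i hi
    have hp := hkpos i hi
    have h1 : a ⟨(K i).val - 1, hklD (K i)⟩ < a (K i) :=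
      hmono (show ((K i).val - 1 : ℕ) < (K i).val from Nat.sub_lt hp Nat.one_pos)
    simp only [hd, hD]
    omega
  have hdb : ∀ i ∈ M, d i ≤ (b : ℤ) := by
    intro i hi
    have hp := hkpos i hi
    have h2 := hgap2 ((K i).val - 1) ((K i).val) (hklD (K i)) (K i).isLt (by omega)
    have h3 : a ⟨(K i).val, (K i).isLt⟩ = a (K i) := congrArg a (Fin.ext rfl)
    simp only [hd, hD]
    omega
  have he1 : ∀ i ∈ M, 1 ≤ e i := by
    intro i hi
    have ht := hktop i hi
    have h1 : a (K i) < a ⟨min ((K i).val + 1) (l - 1), hklE (K i)⟩ :=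
      hmono (show (K i).val < min ((K i).val + 1) (l - 1) from
        lt_min (Nat.lt_succ_self _) ht)
    simp only [he, hE]
    omega
  have heb : ∀ i ∈ M, e i ≤ (b : ℤ) := by
    intro i hi
    have ht := hktop i hi
    have h2 := hgap2 ((K i).val) (min ((K i).val + 1) (l - 1)) (K i).isLt
      (hklE (K i)) (by omega)
    have h3 : a ⟨(K i).val, (K i).isLt⟩ = a (K i) := congrArg a (Fin.ext rfl)
    simp only [he, hE]
    omega
  -- key order facts
  have hP : ∀ i j : Fin n, i ∈ M → s j < s i → s j ≤ s i - d i := by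
    intro i j hi hlt
    have hKlt : K j < K i := hmono.lt_iff_lt.mp ((hK j).trans_lt (hlt.trans_eq (hK i).symm))
    have hKv : (K j).val < (K i).val := hKlt
    have h2 : a (K j) ≤ a ⟨(K i).val - 1, hklD (K i)⟩ := by
      apply hmono.monotone
      show (K j).val ≤ (K i).val - 1
      omega
    have h3 := hK j
    have h4 := hsubd i
    omega
  have hS : ∀ i j : Fin n, i ∈ M → s i < s j → s i + e i ≤ s j := by
    intro i j hi hlt
    have hKlt : K i < K j := hmono.lt_iff_lt.mp ((hK i).trans_lt (hlt.trans_eq (hK j).symm))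
    have hKv : (K i).val < (K j).val := hKlt
    have h2 : a ⟨min ((K i).val + 1) (l - 1), hklE (K i)⟩ ≤ a (K j) := by
      apply hmono.monotone
      show min ((K i).val + 1) (l - 1) ≤ (K j).val
      have := (K j).isLt
      omega
    have h3 := hK j
    have h4 := hadde i
    omega
  -- b ≥ 1
  have hMne : M.Nonempty := Finset.card_pos.mp (by omega)
  have hb1 : 1 ≤ b := by
    obtain ⟨i0, hi0⟩ := hMne
    have h1 := hd1 i0 hi0
    have h2 := hdb i0 hi0
    have h3 : (1 : ℤ) ≤ (b : ℤ) := le_trans h1 h2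
    exact_mod_cast h3
  -- split M into low part F and high part G, each of size b²
  obtain ⟨F, hFsub, hFcard, hFclosed⟩ := low_subset M (b ^ 2) (by omega)
  obtain ⟨G, hGsub, hGcard, hGclosed⟩ := high_subset M (b ^ 2) (by omega)
  have hFG : ∀ i ∈ F, ∀ j ∈ G, i < j := by
    intro i hi j hj
    by_contra hle
    push_neg at hle
    have hjF : j ∈ F := hFclosed i hi j (hGsub hj) hle
    have hsub : M ⊆ F ∪ G := by
      intro v hv
      rcases le_total v j with h | h
      · exact Finset.mem_union_left _ (hFclosed j hjF v hv h)
      · exact Finset.mem_union_right _ (hGclosed j hj v hv h)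
    have h1 := Finset.card_le_card hsub
    have h2 := Finset.card_union_le F G
    omega
  -- pigeonhole for the gaps
  obtain ⟨dstar, hdsmem, hFdcard⟩ :=
    Finset.exists_le_card_fiber_of_mul_le_card_of_maps_to
      (s := F) (t := Finset.Icc 1 b) (f := fun i => (d i).toNat) (n := b)
      (by
        intro i hi
        have h1 := hd1 i (hFsub hi)
        have h2 := hdb i (hFsub hi)
        simp only [Finset.mem_Icc]
        omega)
      ⟨1, by simp only [Finset.mem_Icc]; omega⟩
      (by rw [Nat.card_Icc, hFcard, Nat.add_sub_cancel, pow_two])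
  obtain ⟨estar, hesmem, hGecard⟩ :=
    Finset.exists_le_card_fiber_of_mul_le_card_of_maps_to
      (s := G) (t := Finset.Icc 1 b) (f := fun i => (e i).toNat) (n := b)
      (by
        intro i hi
        have h1 := he1 i (hGsub hi)
        have h2 := heb i (hGsub hi)
        simp only [Finset.mem_Icc]
        omega)
      ⟨1, by simp only [Finset.mem_Icc]; omega⟩
      (by rw [Nat.card_Icc, hGcard, Nat.add_sub_cancel, pow_two])
  rw [Finset.mem_Icc] at hdsmem hesmem
  set Fd := F.filter (fun i => (d i).toNat = dstar) with hFdDef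
  set Ge := G.filter (fun i => (e i).toNat = estar) with hGeDef
  -- sizes of the modified blocks
  set g := Nat.gcd dstar estar with hg
  have hgpos : 0 < g := Nat.gcd_pos_of_pos_left _ (by omega)
  obtain ⟨d', hd'⟩ := Nat.gcd_dvd_left dstar estar
  obtain ⟨e', he'⟩ := Nat.gcd_dvd_right dstar estar
  set x := estar / g with hx
  set y := dstar / g with hy
  have hxe : x = e' := by rw [hx, he', Nat.mul_div_cancel_left _ hgpos]
  have hyd : y = d' := by rw [hy, hd', Nat.mul_div_cancel_left _ hgpos]
  have hx1 : 1 ≤ x := Nat.div_pos (Nat.le_of_dvd (by omega) (Nat.gcd_dvd_right _ _)) hgpos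
  have hy1 : 1 ≤ y := Nat.div_pos (Nat.le_of_dvd (by omega) (Nat.gcd_dvd_left _ _)) hgpos
  have hxb : x ≤ b := le_trans (Nat.div_le_self _ _) hesmem.2
  have hyb : y ≤ b := le_trans (Nat.div_le_self _ _) hdsmem.2
  have hkey : x * dstar = y * estar := by
    rw [hxe, hyd]
    calc e' * dstar = e' * (g * d') := by rw [← hd']
    _ = d' * (g * e') := by ring
    _ = d' * estar := by rw [← he']
  -- choose the lowered block L and the raised block R
  obtain ⟨L, hLsub, hLcard, hLclosed⟩ := low_subset Fd x (le_trans hxb hFdcard)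
  obtain ⟨R, hRsub, hRcard, hRclosed⟩ := high_subset Ge y (le_trans hyb hGecard)
  have hLF : L ⊆ F := hLsub.trans (Finset.filter_subset _ _)
  have hRG : R ⊆ G := hRsub.trans (Finset.filter_subset _ _)
  have hLM : L ⊆ M := hLF.trans hFsub
  have hRM : R ⊆ M := hRG.trans hGsub
  have hLd : ∀ i ∈ L, d i = (dstar : ℤ) := by
    intro i hi
    have h1 : (d i).toNat = dstar := (Finset.mem_filter.mp (hLsub hi)).2
    have h2 := hd1 i (hLM hi)
    omega
  have hRe : ∀ i ∈ R, e i = (estar : ℤ) := by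
    intro i hi
    have h1 : (e i).toNat = estar := (Finset.mem_filter.mp (hRsub hi)).2
    have h2 := he1 i (hRM hi)
    omega
  have hLR : ∀ i ∈ L, ∀ j ∈ R, i < j := fun i hi j hj => hFG i (hLF hi) j (hRG hj)
  have hdisj : ∀ i : Fin n, i ∈ L → i ∈ R → False := fun i hi hj =>
    lt_irrefl i (hLR i hi i hj)
  -- closure of L and R under equal values
  have hLclose' : ∀ i ∈ L, ∀ j, j ≤ i → s j = s i → j ∈ L := by
    intro i hi j hle hv
    have hjM : j ∈ M := hMval i j (hLM hi) hv
    have hjF : j ∈ F := hFclosed i (hLF hi) j hjM hle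
    have hdji : d j = d i := by
      simp only [hd]
      exact congrArg D (hvalK j i hv)
    have hjFd : j ∈ Fd := by
      rw [hFdDef, Finset.mem_filter]
      refine ⟨hjF, ?_⟩
      rw [hdji]
      exact (Finset.mem_filter.mp (hLsub hi)).2
    exact hLclosed i hi j hjFd hle
  have hRclose' : ∀ i ∈ R, ∀ j, i ≤ j → s j = s i → j ∈ R := by
    intro i hi j hle hv
    have hjM : j ∈ M := hMval i j (hRM hi) hv
    have hjG : j ∈ G := hGclosed i (hRG hi) j hjM hle
    have heji : e j = e i := by
      simp only [he]
      exact congrArg E (hvalK j i hv)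
    have hjGe : j ∈ Ge := by
      rw [hGeDef, Finset.mem_filter]
      refine ⟨hjG, ?_⟩
      rw [heji]
      exact (Finset.mem_filter.mp (hRsub hi)).2
    exact hRclosed i hi j hjGe hle
  -- the modified tuple
  set s' : Fin n → ℤ :=
    fun i => if i ∈ L then s i - d i else if i ∈ R then s i + e i else s i with hs'
  have hs'A : ∀ i, s' i ∈ Set.range a := by
    intro i
    simp only [hs']
    split_ifs with h1 h2
    · exact ⟨⟨(K i).val - 1, hklD (K i)⟩, (hsubd i).symm⟩
    · exact ⟨⟨min ((K i).val + 1) (l - 1), hklE (K i)⟩, (hadde i).symm⟩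
    · exact ⟨K i, hK i⟩
  have hs'mono : Monotone s' := by
    intro i j hij
    rcases eq_or_lt_of_le hij with rfl | hlt
    · exact le_refl _
    have hsle : s i ≤ s j := hsmono hij
    simp only [hs']
    by_cases hjL : j ∈ L
    · have hjM := hLM hjL
      by_cases hiL : i ∈ L
      · rw [if_pos hiL, if_pos hjL]
        rcases eq_or_lt_of_le hsle with hveq | hvlt
        · have hdij : d i = d j := by
            simp only [hd]
            exact congrArg D (hvalK i j hveq)
          omega
        · have h1 := hP j i hjM hvlt
          have h2 := hd1 i (hLM hiL)
          omega
      · have hiR : i ∉ R := by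
          intro h
          exact absurd hlt (not_lt.mpr (hLR j hjL i h).le)
        rw [if_neg hiL, if_neg hiR, if_pos hjL]
        rcases eq_or_lt_of_le hsle with hveq | hvlt
        · exact absurd (hLclose' j hjL i hlt.le hveq) hiL
        · exact hP j i hjM hvlt
    · by_cases hiL : i ∈ L
      · rw [if_pos hiL, if_neg hjL]
        have h1 := hd1 i (hLM hiL)
        split_ifs with hjR
        · have h2 := he1 j (hRM hjR)
          omega
        · omega
      · by_cases hiR : i ∈ R
        · rw [if_neg hiL, if_pos hiR, if_neg hjL]
          by_cases hjR : j ∈ R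
          · rw [if_pos hjR]
            rcases eq_or_lt_of_le hsle with hveq | hvlt
            · have heij : e i = e j := by
                simp only [he]
                exact congrArg E (hvalK i j hveq)
              omega
            · have h1 := hS i j (hRM hiR) hvlt
              have h2 := he1 j (hRM hjR)
              omega
          · rw [if_neg hjR]
            rcases eq_or_lt_of_le hsle with hveq | hvlt
            · exact absurd (hRclose' i hiR j hlt.le hveq.symm) hjR
            · exact hS i j (hRM hiR) hvlt
        · rw [if_neg hiL, if_neg hiR, if_neg hjL]
          split_ifs with hjR
          · have h2 := he1 j (hRM hjR)
            omega
          · exact hsle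
  have hs'sum : ∑ i, s' i = t := by
    have hpt : ∀ i, s' i
        = s i + ((if i ∈ L then -(dstar : ℤ) else 0) + (if i ∈ R then (estar : ℤ) else 0)) := by
      intro i
      simp only [hs']
      by_cases h1 : i ∈ L
      · have h2 : i ∉ R := fun h => hdisj i h1 h
        rw [if_pos h1, if_pos h1, if_neg h2, hLd i h1]
        ring
      · by_cases h2 : i ∈ R
        · rw [if_neg h1, if_pos h2, if_neg h1, if_pos h2, hRe i h2]
          ring
        · rw [if_neg h1, if_neg h2, if_neg h1, if_neg h2]
          ring
    rw [Finset.sum_congr rfl (fun i _ => hpt i), Finset.sum_add_distrib,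
      Finset.sum_add_distrib, hsum, Finset.sum_ite_mem, Finset.sum_ite_mem,
      Finset.univ_inter, Finset.univ_inter, Finset.sum_const, Finset.sum_const,
      hLcard, hRcard]
    have hkeyz : (x : ℤ) * dstar = (y : ℤ) * estar := by exact_mod_cast hkey
    simp only [nsmul_eq_mul]
    linarith
  -- the modified tuple is lexicographically smaller: contradiction
  have hLne : L.Nonempty := Finset.card_pos.mp (by omega)
  set i0 := L.min' hLne with hi0def
  have hi0L : i0 ∈ L := Finset.min'_mem _ _
  refine hmin s' hs'A hs'mono hs'sum ⟨i0, ?_, ?_⟩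
  · intro j hj
    have hjL : j ∉ L := fun h => absurd (Finset.min'_le L j h) (not_le.mpr hj)
    have hjR : j ∉ R := fun h => absurd (hLR i0 hi0L j h) (not_lt.mpr hj.le)
    simp only [hs']
    rw [if_neg hjL, if_neg hjR]
  · simp only [hs']
    rw [if_pos hi0L]
    have := hd1 i0 (hLM hi0L)
    omega
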